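/- Let g : I → ℝ be differentiable on an interval I ⊂ (0,∞), κ ≠ 0, f₀, and suppose g satisfies u(1+u)g'(u) + (1-κ)g(u) + f₀·(u/(1+u))^κ = 0 on I. Then there is a constant g₀ with g(u) = (g₀ - f₀·u/(1+u))·(u/(1+u))^{κ-1} for all u ∈ I. -/

import Mathlib

open Real Set

lemma hasDerivAt_div_one_add {u : ℝ} (hu : 1 + u ≠ 0) :
    HasDerivAt (fun v : ℝ => v / (1 + v)) (1 / (1 + u) ^ 2) u := by
  refine ((hasDerivAt_id u).div ((hasDerivAt_id u).const_add 1) hu).congr_deriv ?_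
  simp

/-- `(u / (1 + u)) ^ (1 - κ)` is an integrating factor of the equation, and the forcing term
`f₀ (u / (1 + u)) ^ κ / (u (1 + u))` it produces is exactly the derivative of `f₀ u / (1 + u)`. -/
lemma hasDerivAt_first_integral {g : ℝ → ℝ} {g' κ f₀ u : ℝ} (hu : 0 < u)
    (hg : HasDerivAt g g' u)
    (hODE : u * (1 + u) * g' + (1 - κ) * g u + f₀ * (u / (1 + u)) ^ κ = 0) :
    HasDerivAt (fun v => g v * (v / (1 + v)) ^ (1 - κ) + f₀ * (v / (1 + v))) 0 u := by
  have h1u : 1 + u ≠ 0 := by positivity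
  have ht : 0 < u / (1 + u) := by positivity
  have hdt := hasDerivAt_div_one_add h1u
  refine ((hg.mul (hdt.rpow_const (p := 1 - κ) (Or.inl ht.ne'))).add
    (hdt.const_mul f₀)).congr_deriv ?_
  have hsplit : (u / (1 + u)) ^ (1 - κ) = u / (1 + u) * (u / (1 + u)) ^ (-κ) := by
    rw [sub_eq_add_neg, rpow_add ht, rpow_one]
  have hinv : (u / (1 + u)) ^ κ * (u / (1 + u)) ^ (-κ) = 1 := by
    rw [← rpow_add ht, add_neg_cancel, rpow_zero]
  rw [hsplit, sub_sub_cancel_left]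
  field_simp
  linear_combination (u / (1 + u)) ^ (-κ) * hODE - f₀ * hinv

lemma eq_sub_mul_rpow_of_mul_rpow_add_eq {y t κ f₀ c : ℝ} (ht : 0 < t)
    (h : y * t ^ (1 - κ) + f₀ * t = c) : y = (c - f₀ * t) * t ^ (κ - 1) := by
  rw [← h, add_sub_cancel_right, mul_assoc, ← rpow_add ht, sub_add_sub_cancel', sub_self,
    rpow_zero, mul_one]

theorem stmt16_general (g : ℝ → ℝ) (a b κ f₀ : ℝ) (hI : Set.Ioo a b ⊆ Set.Ioi 0)
    (hgd : ∀ u ∈ Set.Ioo a b, DifferentiableAt ℝ g u)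
    (hODE : ∀ u ∈ Set.Ioo a b,
      u * (1 + u) * deriv g u + (1 - κ) * g u + f₀ * (u / (1 + u)) ^ κ = 0) :
    ∃ g₀ : ℝ, ∀ u ∈ Set.Ioo a b,
      g u = (g₀ - f₀ * (u / (1 + u))) * (u / (1 + u)) ^ (κ - 1) := by
  have hF : ∀ u ∈ Ioo a b,
      HasDerivAt (fun v => g v * (v / (1 + v)) ^ (1 - κ) + f₀ * (v / (1 + v))) 0 u :=
    fun u hu => hasDerivAt_first_integral (hI hu) (hgd u hu).hasDerivAt (hODE u hu)
  obtain ⟨g₀, hg₀⟩ := isOpen_Ioo.exists_is_const_of_deriv_eq_zero isPreconnected_Ioo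
    (fun u hu => (hF u hu).differentiableAt.differentiableWithinAt) (fun u hu => (hF u hu).deriv)
  have hpos : ∀ u ∈ Ioo a b, 0 < u / (1 + u) := fun u hu => by
    have : 0 < u := hI hu
    positivity
  exact ⟨g₀, fun u hu => eq_sub_mul_rpow_of_mul_rpow_add_eq (hpos u hu) (hg₀ u hu)⟩

/-- if g satisfies u(1+u)g'(u) + (1−κ)g(u) + f₀(u/(1+u))^κ = 0 on
an interval I ⊂ (0,∞) with κ ≠ 0, then
g(u) = (g₀ − f₀·u/(1+u))·(u/(1+u))^{κ−1} for some constant g₀. -/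
theorem stmt16 (g : ℝ → ℝ) (a b κ f₀ : ℝ) (hκ : κ ≠ 0) (hI : Set.Ioo a b ⊆ Set.Ioi 0)
    (hgd : ∀ u ∈ Set.Ioo a b, DifferentiableAt ℝ g u)
    (hODE : ∀ u ∈ Set.Ioo a b,
      u * (1 + u) * deriv g u + (1 - κ) * g u + f₀ * (u / (1 + u)) ^ κ = 0) :
    ∃ g₀ : ℝ, ∀ u ∈ Set.Ioo a b,
      g u = (g₀ - f₀ * (u / (1 + u))) * (u / (1 + u)) ^ (κ - 1) :=
  stmt16_general g a b κ f₀ hI hgd hODE
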